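/- Let (v̄₁, v̄₂), where v̄_i = (v₀^i, v₁^i, ..., v_k^i) for i = 1,2, be a pair of separating walks in G_d. If for some ℓ ∈ {0,1,...,k−1} the node v_{ℓ+1}^i is a child of node v_ℓ^i for both i = 1,2, and π_d(v_ℓ^1, v_{ℓ+1}^1) = π_d(v_ℓ^2, v_{ℓ+1}^2), then (v̄₁, v̄₂) is not a critical pair of separating walks in G_d. -/

import Mathlib

namespace Paper

/-- Nodes of the tree `G_d` are finite sequences of pairs of numbers.
We represent a sequence `(a₁, …, a_i)` as the list `[a_i, …, a₁]`, i.e. in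
reverse order, so that consing corresponds to appending a pair at the end. -/
abbrev Nd : Type := ℕ × ℕ

/-- `b₂⁺`: `1` if `b₂ = 0`, and `b₂` otherwise. -/
def bplus (b : ℕ) : ℕ := if b = 0 then 1 else b

/-- For `j ≥ 1`, the `j`-th smallest element of `{lo, lo+1, lo+2, …} \ {f}`.
This realises the greedy choices `c^j = min({lo,…} \ {f, c¹, …, c^{j-1}})`. -/
def nthAvoid (lo f j : ℕ) : ℕ :=
  if lo + j - 1 < f ∨ f < lo then lo + j - 1 else lo + j

/-- The node set `V_d` of the graph `G_d`, given by the rules (G1)–(G4).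
(Sequences are represented as reversed lists, the head being the last pair
`a_i` of the sequence.) -/
inductive Vd (d : ℕ) : List Nd → Prop
  /-- (G1): the empty sequence is a node. -/
  | nil : Vd d []
  /-- (G2): the sequences `((1,0)), ((2,1)), …, ((d,d−1))` are nodes. -/
  | base (k : ℕ) (h1 : 1 ≤ k) (h2 : k ≤ d) : Vd d [(k, k - 1)]
  /-- (G3): children of a node of odd length `< 2d` with last pair `(b₁, b₂)`:
  for `j = 1, …, d−1` append `(c₁ʲ, c₂ʲ)` where `c₁ʲ` is the `j`-th smallest
  element of `{1,…,d} \ {b₂⁺}` and `c₂ʲ` the `j`-th smallest of `{1,…,d} \ {b₁}`. -/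
  | odd (b₁ b₂ : ℕ) (rest : List Nd)
      (hv : Vd d ((b₁, b₂) :: rest))
      (hodd : Odd ((b₁, b₂) :: rest).length)
      (hlt : ((b₁, b₂) :: rest).length < 2 * d)
      (j : ℕ) (hj1 : 1 ≤ j) (hj2 : j ≤ d - 1) :
      Vd d ((nthAvoid 1 (bplus b₂) j, nthAvoid 1 b₁ j) :: (b₁, b₂) :: rest)
  /-- (G4): children of a node of even positive length `< 2d` with last pair
  `(b₁, b₂)`: for `j = 1, …, d−1` append `(c₁ʲ, c₂ʲ)` where `c₁ʲ` is the `j`-th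
  smallest element of `{1,…,d} \ {b₂}` and `c₂ʲ` the `j`-th smallest of
  `{0,…,d−1} \ {b₁}`. -/
  | even (b₁ b₂ : ℕ) (rest : List Nd)
      (hv : Vd d ((b₁, b₂) :: rest))
      (heven : Even ((b₁, b₂) :: rest).length)
      (hlt : ((b₁, b₂) :: rest).length < 2 * d)
      (j : ℕ) (hj1 : 1 ≤ j) (hj2 : j ≤ d - 1) :
      Vd d ((nthAvoid 1 b₂ j, nthAvoid 0 b₁ j) :: (b₁, b₂) :: rest)

/-- The edge relation of `G_d`: `u` is a child of `v` or vice versa. -/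
def Ed (d : ℕ) (v u : List Nd) : Prop :=
  Vd d v ∧ Vd d u ∧ ∃ a : Nd, u = a :: v ∨ v = a :: u

/-- The outgoing port number `π_d(v, u)` from `v` towards an adjacent node `u`:
if `u = (b₁, b₂) :: v` is a child of `v` then `b₁`, and if `v = (b₁, b₂) :: u`
is a child of `u` then `b₂`. -/
def outPort (v u : List Nd) : ℕ :=
  if u.length = v.length + 1 then u.headI.1 else v.headI.2

/-- A pair of compatible walks (PCW) of length `k` in `G_d`:
two walks starting at `((1,0))` and `((2,1))` such that the outgoing port
numbers backwards along the walks coincide. -/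
structure IsPCW (d k : ℕ) (w₁ w₂ : ℕ → List Nd) : Prop where
  klen : k ≤ 2 * d - 3
  walk₁ : ∀ j < k, Ed d (w₁ j) (w₁ (j + 1))
  walk₂ : ∀ j < k, Ed d (w₂ j) (w₂ (j + 1))
  start₁ : w₁ 0 = [(1, 0)]
  start₂ : w₂ 0 = [(2, 1)]
  compat : ∀ j, 1 ≤ j → j ≤ k →
    outPort (w₁ j) (w₁ (j - 1)) = outPort (w₂ j) (w₂ (j - 1))

/-- A pair of separating walks (PSW): a PCW such that the last node of the
first walk has a neighbour whose outgoing port number towards it is matched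
by no neighbour of the last node of the second walk. -/
structure IsPSW (d k : ℕ) (w₁ w₂ : ℕ → List Nd)
    extends IsPCW d k w₁ w₂ : Prop where
  sep : ∃ x, Ed d (w₁ k) x ∧
    ∀ y, Ed d (w₂ k) y → outPort x (w₁ k) ≠ outPort y (w₂ k)

/-- A PSW of length `k` in `G_d` is critical if there is no strictly shorter
PSW in `G_d`. -/
def IsCriticalPSW (d k : ℕ) (w₁ w₂ : ℕ → List Nd) : Prop :=
  IsPSW d k w₁ w₂ ∧ ∀ k' w₁' w₂', IsPSW d k' w₁' w₂' → k ≤ k'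

/-!
After both walks step down from time `ℓ` through the same port, they stay in lockstep:
since the labels of children depend only on the last pair and the parity of the depth,
the compatibility condition forces both walks to stack the same pairs on top of their
nodes at time `ℓ`, or to pop them simultaneously. If they never pop back to their
nodes at time `ℓ`, their final nodes have the same last pair and depth parity, so every
neighbour of the first is matched by one of the second, contradicting separation. If
they do return simultaneously, cutting out this loop from both walks yields a shorter
pair of separating walks.
-/

/- A child of a node whose last pair is `b` and whose length is `n` is labelled
`childPair b n j` for some `1 ≤ j ≤ d - 1`; rules (G3) and (G4) differ only in the
parity of `n`. -/
def childPair (b : Nd) (n j : ℕ) : Nd :=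
  (if n % 2 = 1 then nthAvoid 1 (bplus b.2) j else nthAvoid 1 b.2 j, nthAvoid (n % 2) b.1 j)

lemma nthAvoid_ne {lo f j : ℕ} (hj : 1 ≤ j) : nthAvoid lo f j ≠ f := by
  unfold nthAvoid; split <;> omega

lemma nthAvoid_injective {lo f j j' : ℕ} (hj : 1 ≤ j) (hj' : 1 ≤ j')
    (h : nthAvoid lo f j = nthAvoid lo f j') : j = j' := by
  unfold nthAvoid at h; split at h <;> split at h <;> omega

lemma childPair_congr (b : Nd) {n m : ℕ} (h : n % 2 = m % 2) (j : ℕ) :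
    childPair b n j = childPair b m j := by
  simp only [childPair, h]

lemma childPair_snd_ne {b : Nd} {n j : ℕ} (hj : 1 ≤ j) : (childPair b n j).2 ≠ b.1 :=
  nthAvoid_ne hj

lemma childPair_eq_of_snd_eq {b : Nd} {n m j j' : ℕ} (h : n % 2 = m % 2)
    (hj : 1 ≤ j) (hj' : 1 ≤ j') (hsnd : (childPair b n j).2 = (childPair b m j').2) :
    childPair b n j = childPair b m j' := by
  rw [childPair, childPair, h] at hsnd
  rw [nthAvoid_injective hj hj' hsnd, childPair_congr b h]

lemma Vd.of_cons {d : ℕ} {c : Nd} {x : List Nd} (h : Vd d (c :: x)) : Vd d x := by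
  cases h with
  | base => exact Vd.nil
  | odd _ _ _ hv => exact hv
  | even _ _ _ hv => exact hv

lemma Vd.eq_childPair {d : ℕ} {c b : Nd} {s : List Nd} (h : Vd d (c :: b :: s)) :
    ∃ j, 1 ≤ j ∧ j ≤ d - 1 ∧ c = childPair b (s.length + 1) j := by
  cases h with
  | odd b₁ b₂ rest hv hodd hlt j hj1 hj2 =>
    have hpar : (s.length + 1) % 2 = 1 := Nat.odd_iff.mp (by simpa using hodd)
    exact ⟨j, hj1, hj2, by simp [childPair, hpar]⟩
  | even b₁ b₂ rest hv heven hlt j hj1 hj2 =>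
    have hpar : (s.length + 1) % 2 = 0 := Nat.even_iff.mp (by simpa using heven)
    exact ⟨j, hj1, hj2, by simp [childPair, hpar]⟩

lemma Vd.childPair_cons {d : ℕ} {b : Nd} {s : List Nd} (h : Vd d (b :: s))
    (hlen : s.length + 1 < 2 * d) {j : ℕ} (hj1 : 1 ≤ j) (hj2 : j ≤ d - 1) :
    Vd d (childPair b (s.length + 1) j :: b :: s) := by
  obtain ⟨b₁, b₂⟩ := b
  rcases Nat.mod_two_eq_zero_or_one (s.length + 1) with hpar | hpar
  · have heven : Even ((b₁, b₂) :: s).length := Nat.even_iff.mpr (by simpa using hpar)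
    simpa [childPair, hpar] using Vd.even b₁ b₂ s h heven (by simpa using hlen) j hj1 hj2
  · have hodd : Odd ((b₁, b₂) :: s).length := Nat.odd_iff.mpr (by simpa using hpar)
    simpa [childPair, hpar] using Vd.odd b₁ b₂ s h hodd (by simpa using hlen) j hj1 hj2

@[simp]
lemma outPort_child (a : Nd) (v : List Nd) : outPort v (a :: v) = a.1 := by
  simp [outPort]

@[simp]
lemma outPort_parent (a : Nd) (v : List Nd) : outPort (a :: v) v = a.2 := by
  simp [outPort, show v.length ≠ v.length + 1 + 1 by omega]

lemma Ed.length_eq_succ_or {d : ℕ} {v u : List Nd} (h : Ed d v u) :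
    u.length = v.length + 1 ∨ v.length = u.length + 1 := by
  obtain ⟨-, -, a, rfl | rfl⟩ := h <;> simp

/- The labels of the children depend only on the last pair and the parity of the depth,
and a child's port towards its parent is never the parent's port towards the grandparent. -/
lemma Ed_lockstep {d : ℕ} {h : Nd} {s₁ s₂ y₁ y₂ : List Nd}
    (hpar : s₁.length % 2 = s₂.length % 2) (h₁ : Ed d (h :: s₁) y₁) (h₂ : Ed d (h :: s₂) y₂)
    (hport : outPort y₁ (h :: s₁) = outPort y₂ (h :: s₂)) :
    (∃ c, y₁ = c :: h :: s₁ ∧ y₂ = c :: h :: s₂) ∨ (y₁ = s₁ ∧ y₂ = s₂) := by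
  have hpar' : (s₁.length + 1) % 2 = (s₂.length + 1) % 2 := by omega
  obtain ⟨-, hV₁, c₁, rfl | hup₁⟩ := h₁ <;> obtain ⟨-, hV₂, c₂, rfl | hup₂⟩ := h₂
  · obtain ⟨j₁, hj₁, -, rfl⟩ := hV₁.eq_childPair
    obtain ⟨j₂, hj₂, -, rfl⟩ := hV₂.eq_childPair
    simp only [outPort_parent] at hport
    exact .inl ⟨_, rfl, by rw [childPair_eq_of_snd_eq hpar' hj₁ hj₂ hport]⟩
  · obtain ⟨j₁, hj₁, -, rfl⟩ := hV₁.eq_childPair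
    obtain ⟨rfl, rfl⟩ := List.cons.inj hup₂
    simp only [outPort_parent, outPort_child] at hport
    exact absurd hport (childPair_snd_ne hj₁)
  · obtain ⟨j₂, hj₂, -, rfl⟩ := hV₂.eq_childPair
    obtain ⟨rfl, rfl⟩ := List.cons.inj hup₁
    simp only [outPort_parent, outPort_child] at hport
    exact absurd hport.symm (childPair_snd_ne hj₂)
  · exact .inr ⟨(List.cons.inj hup₁).2.symm, (List.cons.inj hup₂).2.symm⟩

lemma exists_Ed_outPort_eq {d : ℕ} {h : Nd} {s₁ s₂ x : List Nd}
    (hpar : s₁.length % 2 = s₂.length % 2) (hV : Vd d (h :: s₂)) (hlen : s₂.length + 1 < 2 * d)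
    (hx : Ed d (h :: s₁) x) :
    ∃ y, Ed d (h :: s₂) y ∧ outPort x (h :: s₁) = outPort y (h :: s₂) := by
  obtain ⟨-, hVx, c, rfl | hup⟩ := hx
  · obtain ⟨j, hj1, hj2, rfl⟩ := hVx.eq_childPair
    refine ⟨_, ⟨hV, hV.childPair_cons hlen hj1 hj2, _, .inl rfl⟩, ?_⟩
    have hpar' : (s₁.length + 1) % 2 = (s₂.length + 1) % 2 := by omega
    simp only [outPort_parent, childPair_congr h hpar' j]
  · obtain ⟨rfl, rfl⟩ := List.cons.inj hup
    exact ⟨s₂, ⟨hV, hV.of_cons, h, .inr rfl⟩, by simp⟩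

lemma length_of_Ed_chain {d k : ℕ} {w : ℕ → List Nd} (hw : ∀ j < k, Ed d (w j) (w (j + 1)))
    {j : ℕ} (hj : j ≤ k) :
    (w j).length ≤ (w 0).length + j ∧ (w j).length % 2 = ((w 0).length + j) % 2 := by
  induction j with
  | zero => simp
  | succ n ih =>
    have := ih (by omega)
    rcases (hw n (by omega)).length_eq_succ_or with h | h <;> omega

/- Deleting the steps `ℓ, …, ℓ + n - 1` of a walk that returns at time `ℓ + n` to
its position at time `ℓ`. -/
def skipLoop (ℓ n j : ℕ) : ℕ := if j ≤ ℓ then j else j + n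

lemma chain_comp_skipLoop {α : Type*} {R : α → α → Prop} {w : ℕ → α} {k ℓ n : ℕ}
    (hw : ∀ j < k + n, R (w j) (w (j + 1))) (hloop : w (ℓ + n) = w ℓ) :
    ∀ j < k, R (w (skipLoop ℓ n j)) (w (skipLoop ℓ n (j + 1))) := by
  intro j hj
  rcases lt_trichotomy j ℓ with h | rfl | h
  · simp only [skipLoop, if_pos h.le, if_pos (Nat.succ_le_of_lt h)]
    exact hw j (by omega)
  · simp only [skipLoop, le_refl, if_true, if_neg (Nat.not_succ_le_self j)]
    rw [← hloop, show j + 1 + n = j + n + 1 by omega]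
    exact hw (j + n) (by omega)
  · simp only [skipLoop, if_neg (Nat.not_le_of_lt h), if_neg (by omega : ¬ j + 1 ≤ ℓ)]
    rw [show j + 1 + n = j + n + 1 by omega]
    exact hw (j + n) (by omega)

section Walks

variable {d k : ℕ} {w₁ w₂ : ℕ → List Nd}

lemma IsPCW.outPort_succ (hw : IsPCW d k w₁ w₂) {j : ℕ} (hj : j < k) :
    outPort (w₁ (j + 1)) (w₁ j) = outPort (w₂ (j + 1)) (w₂ j) := by
  simpa using hw.compat (j + 1) (by omega) (by omega)

lemma IsPCW.length_le₂ (hw : IsPCW d k w₁ w₂) {j : ℕ} (hj : j ≤ k) : (w₂ j).length ≤ j + 1 := by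
  have := (length_of_Ed_chain hw.walk₂ hj).1
  rwa [hw.start₂, List.length_singleton, add_comm] at this

lemma IsPCW.length_mod_two_eq (hw : IsPCW d k w₁ w₂) {j : ℕ} (hj : j ≤ k) :
    (w₁ j).length % 2 = (w₂ j).length % 2 := by
  rw [(length_of_Ed_chain hw.walk₁ hj).2, (length_of_Ed_chain hw.walk₂ hj).2, hw.start₁,
    hw.start₂, List.length_singleton, List.length_singleton]

lemma IsPCW.lockstep_or_return (hw : IsPCW d k w₁ w₂) {ℓ : ℕ}
    (hpar : (w₁ ℓ).length % 2 = (w₂ ℓ).length % 2) {a : Nd}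
    (h₁ : w₁ (ℓ + 1) = a :: w₁ ℓ) (h₂ : w₂ (ℓ + 1) = a :: w₂ ℓ) {m : ℕ} (hℓm : ℓ < m)
    (hm : m ≤ k) :
    (∃ h σ, w₁ m = h :: σ ++ w₁ ℓ ∧ w₂ m = h :: σ ++ w₂ ℓ) ∨
      ∃ t, ℓ < t ∧ t ≤ m ∧ w₁ t = w₁ ℓ ∧ w₂ t = w₂ ℓ := by
  induction m, hℓm using Nat.le_induction with
  | base => exact .inl ⟨a, [], h₁, h₂⟩
  | succ n hn ih =>
    rcases ih (by omega) with ⟨h, σ, e₁, e₂⟩ | ⟨t, hℓt, htn, ht₁, ht₂⟩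
    · have hstep₁ := hw.walk₁ n (by omega)
      have hstep₂ := hw.walk₂ n (by omega)
      have hport := hw.outPort_succ (j := n) (by omega)
      rw [e₁] at hstep₁ hport
      rw [e₂] at hstep₂ hport
      have hpar' : (σ ++ w₁ ℓ).length % 2 = (σ ++ w₂ ℓ).length % 2 := by
        simp only [List.length_append]; omega
      rcases Ed_lockstep hpar' hstep₁ hstep₂ hport with ⟨c, hc₁, hc₂⟩ | ⟨hp₁, hp₂⟩
      · exact .inl ⟨c, h :: σ, hc₁, hc₂⟩
      · cases σ with
        | nil => exact .inr ⟨n + 1, by omega, le_rfl, hp₁, hp₂⟩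
        | cons h' σ' => exact .inl ⟨h', σ', hp₁, hp₂⟩
    · exact .inr ⟨t, hℓt, by omega, ht₁, ht₂⟩

lemma IsPSW.false_of_ends_share_head (hpsw : IsPSW d k w₁ w₂) (hk : 0 < k) {h : Nd}
    {s₁ s₂ : List Nd} (e₁ : w₁ k = h :: s₁) (e₂ : w₂ k = h :: s₂)
    (hpar : s₁.length % 2 = s₂.length % 2) : False := by
  obtain ⟨x, hx, hsep⟩ := hpsw.sep
  have hV : Vd d (w₂ k) := by
    simpa [Nat.sub_add_cancel hk] using (hpsw.walk₂ (k - 1) (by omega)).2.1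
  have hlen : s₂.length + 1 < 2 * d := by
    have := hpsw.length_le₂ le_rfl
    have := hpsw.klen
    simp only [e₂, List.length_cons] at *
    omega
  rw [e₁] at hx hsep
  rw [e₂] at hV hsep
  obtain ⟨y, hy, hxy⟩ := exists_Ed_outPort_eq hpar hV hlen hx
  exact hsep y hy hxy

lemma IsPSW.comp_skipLoop {n ℓ : ℕ} (hpsw : IsPSW d (k + n) w₁ w₂) (hℓ : ℓ ≤ k)
    (h₁ : w₁ (ℓ + n) = w₁ ℓ) (h₂ : w₂ (ℓ + n) = w₂ ℓ) :
    IsPSW d k (w₁ ∘ skipLoop ℓ n) (w₂ ∘ skipLoop ℓ n) := by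
  have hend : ∀ w : ℕ → List Nd, w (ℓ + n) = w ℓ → w (skipLoop ℓ n k) = w (k + n) := by
    intro w hw
    by_cases hk : k ≤ ℓ
    · rw [skipLoop, if_pos hk, show k = ℓ by omega, hw]
    · rw [skipLoop, if_neg hk]
  refine ⟨⟨by have := hpsw.klen; omega, chain_comp_skipLoop hpsw.walk₁ h₁,
    chain_comp_skipLoop hpsw.walk₂ h₂, by simpa [skipLoop] using hpsw.start₁,
    by simpa [skipLoop] using hpsw.start₂, ?_⟩, ?_⟩
  · intro j hj1 hj2
    obtain ⟨i, rfl⟩ : ∃ i, j = i + 1 := ⟨j - 1, by omega⟩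
    simpa using chain_comp_skipLoop (R := fun a b => outPort b.1 a.1 = outPort b.2 a.2)
      (w := fun j => (w₁ j, w₂ j)) (fun j hj => hpsw.outPort_succ hj) (Prod.ext h₁ h₂) i (by omega)
  · simpa only [Function.comp, hend w₁ h₁, hend w₂ h₂] using hpsw.sep

lemma IsPSW.not_isCriticalPSW_of_loop (hpsw : IsPSW d k w₁ w₂) {ℓ t : ℕ} (hℓt : ℓ < t)
    (htk : t ≤ k) (h₁ : w₁ t = w₁ ℓ) (h₂ : w₂ t = w₂ ℓ) : ¬ IsCriticalPSW d k w₁ w₂ := by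
  rintro ⟨-, hmin⟩
  obtain ⟨n, rfl⟩ : ∃ n, t = ℓ + n := ⟨t - ℓ, by omega⟩
  obtain ⟨k', rfl⟩ : ∃ k', k = k' + n := ⟨k - n, by omega⟩
  have := hmin k' _ _ (hpsw.comp_skipLoop (by omega) h₁ h₂)
  omega

end Walks

theorem PSW_not_critical_of_identical_edges_general (d k : ℕ)
    (w₁ w₂ : ℕ → List Nd) (hpsw : IsPSW d k w₁ w₂)
    (ℓ : ℕ) (hℓ : ℓ < k)
    (hc₁ : ∃ a : Nd, w₁ (ℓ + 1) = a :: w₁ ℓ)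
    (hc₂ : ∃ a : Nd, w₂ (ℓ + 1) = a :: w₂ ℓ)
    (hport : outPort (w₁ ℓ) (w₁ (ℓ + 1)) = outPort (w₂ ℓ) (w₂ (ℓ + 1))) :
    ¬ IsCriticalPSW d k w₁ w₂ := by
  obtain ⟨a, ha₁⟩ := hc₁
  obtain ⟨a', ha₂⟩ := hc₂
  have hport_up := hpsw.outPort_succ hℓ
  rw [ha₁, ha₂] at hport hport_up
  simp only [outPort_child, outPort_parent] at hport hport_up
  obtain rfl : a' = a := Prod.ext hport.symm hport_up.symm
  have hpar := hpsw.length_mod_two_eq hℓ.le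
  rcases hpsw.lockstep_or_return hpar ha₁ ha₂ hℓ le_rfl with
    ⟨h, σ, e₁, e₂⟩ | ⟨t, hℓt, htk, ht₁, ht₂⟩
  · exact fun _ => hpsw.false_of_ends_share_head (s₁ := σ ++ w₁ ℓ) (s₂ := σ ++ w₂ ℓ)
      (by omega) e₁ e₂ (by rw [List.length_append, List.length_append]; omega)
  · exact hpsw.not_isCriticalPSW_of_loop hℓt htk ht₁ ht₂

/-- If in a PSW both walks step from position `ℓ` to a child with identical
outgoing port numbers from the parents, then the PSW is not critical. -/
theorem PSW_not_critical_of_identical_edges (d k : ℕ) (hd : 2 ≤ d)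
    (w₁ w₂ : ℕ → List Nd) (hpsw : IsPSW d k w₁ w₂)
    (ℓ : ℕ) (hℓ : ℓ < k)
    (hc₁ : ∃ a : Nd, w₁ (ℓ + 1) = a :: w₁ ℓ)
    (hc₂ : ∃ a : Nd, w₂ (ℓ + 1) = a :: w₂ ℓ)
    (hport : outPort (w₁ ℓ) (w₁ (ℓ + 1)) = outPort (w₂ ℓ) (w₂ (ℓ + 1))) :
    ¬ IsCriticalPSW d k w₁ w₂ :=
  PSW_not_critical_of_identical_edges_general d k w₁ w₂ hpsw ℓ hℓ hc₁ hc₂ hport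

end Paper
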